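/- Consider a simultaneous round of merges: a set of roots R' ⊆ R (roots of a correct forest F), each r ∈ R' selecting as new parent a node target(r) which is a root of F, subject to the condition that score(r) < score(target(r)) for a fixed injective score function on all nodes. Then the resulting parent structure (F together with the new edges r → target(r)) is still a correct forest. -/

import Mathlib

/-!
Off the old roots the new parent function agrees with the old one, so every old path to a root
is still a path; it only remains to see that each old root reaches a new root. A new edge leaves
an old root for an old root of strictly larger score, so along new edges from old roots the
score increases, and on a finite vertex set this cannot go on forever: well-founded induction on
the score, taken downwards, shows that every old root is valid for the new parent function.
-/

variable {V : Type*}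

/-- Iterating a parent function `p : V → Option V`: `piter p n v` is the `n`-th parent
of `v` (or `none` if the chain has ended). -/
def piter (p : V → Option V) (n : ℕ) (v : V) : Option V := (fun o => o.bind p)^[n] (some v)

/-- A vertex is valid if some finite iteration of the parent function from it reaches a
vertex with no parent (a root). -/
def pvalid (p : V → Option V) (v : V) : Prop := ∃ n u, piter p n v = some u ∧ p u = none

/-- Weak connectivity relation of the functional digraph with edges `v → p v`. -/
def pconn (p : V → Option V) : V → V → Prop :=
  Relation.ReflTransGen (fun a b => p a = some b ∨ p b = some a)

theorem pconn_equiv (p : V → Option V) : Equivalence (pconn p) :=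
  ⟨fun _ => .refl,
   fun h => (@Relation.ReflTransGen.stdSymm _ _ ⟨fun _ _ hab => Or.symm hab⟩).symm _ _ h,
   fun h₁ h₂ => h₁.trans h₂⟩

/-- The setoid whose classes are the weakly connected components of the functional
digraph of `p`. -/
def pSetoid (p : V → Option V) : Setoid V := ⟨pconn p, pconn_equiv p⟩

section

variable {p q : V → Option V}

lemma piter_succ (n : ℕ) (v : V) : piter p (n + 1) v = (p v).bind (piter p n) := by
  cases h : p v with
  | none => simpa [piter, h] using Function.iterate_fixed (f := fun o : Option V => o.bind p) rfl n
  | some w => simp [piter, h]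

lemma pvalid_of_eq_none {v : V} (h : p v = none) : pvalid p v := ⟨0, v, rfl, h⟩

lemma pvalid_of_eq_some {v w : V} (h : p v = some w) (hw : pvalid p w) : pvalid p v := by
  obtain ⟨n, u, hn, hu⟩ := hw
  exact ⟨n + 1, u, by rw [piter_succ, h]; exact hn, hu⟩

lemma pvalid_of_eq_off_roots (heq : ∀ w, p w ≠ none → q w = p w)
    (hroot : ∀ u, p u = none → pvalid q u) {v : V} (hv : pvalid p v) : pvalid q v := by
  obtain ⟨n, u, hn, hu⟩ := hv
  induction n generalizing v with
  | zero => exact Option.some_injective _ hn ▸ hroot u hu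
  | succ n ih =>
    rw [piter_succ] at hn
    cases hpv : p v with
    | none => simp [hpv] at hn
    | some w =>
      rw [hpv, Option.bind_some] at hn
      exact pvalid_of_eq_some ((heq v (by simp [hpv])).trans hpv) (ih hn)

lemma pvalid_of_score_lt {S : Type*} [Preorder S] [Finite V] (score : V → S) {R : Set V}
    (hR : ∀ u ∈ R, q u = none ∨ ∃ t ∈ R, q u = some t ∧ score u < score t) :
    ∀ u ∈ R, pvalid q u := by
  have hwf : WellFounded (fun t u : V => score u < score t) :=
    @Finite.wellFounded_of_trans_of_irrefl _ _ _ ⟨fun _ _ _ h₁ h₂ => h₂.trans h₁⟩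
      ⟨fun _ => lt_irrefl _⟩
  intro u
  induction u using hwf.induction with
  | _ u ih =>
    intro hu
    obtain hnone | ⟨t, ht, hut, hlt⟩ := hR u hu
    · exact pvalid_of_eq_none hnone
    · exact pvalid_of_eq_some hut (ih t hlt ht)

end

theorem simultaneous_select_correct {S : Type*} [LinearOrder S] [Fintype V]
    (p : V → Option V) (hvalid : ∀ v, pvalid p v)
    (score : V → S)
    (sel : V → Option V)
    (hsel : ∀ r t, sel r = some t → p r = none ∧ p t = none ∧ score r < score t) :
    ∀ v, pvalid (fun x => match sel x with | some t => some t | none => p x) v := by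
  set q : V → Option V := fun x => match sel x with | some t => some t | none => p x
  have heq : ∀ w, p w ≠ none → q w = p w := fun w hw => by
    cases hs : sel w with
    | none => simp [q, hs]
    | some t => exact absurd (hsel w t hs).1 hw
  have hroot : ∀ u ∈ {u | p u = none},
      q u = none ∨ ∃ t ∈ {u | p u = none}, q u = some t ∧ score u < score t := fun u hu => by
    cases hs : sel u with
    | none => exact .inl (by simpa [q, hs] using hu)
    | some t => exact .inr ⟨t, (hsel u t hs).2.1, by simp [q, hs], (hsel u t hs).2.2⟩
  exact fun v => pvalid_of_eq_off_roots heq (pvalid_of_score_lt score hroot) (hvalid v)
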